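/- If ψ(C ⊗ M) ⊆ M ⊗ C, then condition (iii) of the crossed product data — ρ(c₍₁₎ ⊗ (xy)_α) ⊗ c₍₂₎^α = ρ(c₍₁₎ ⊗ x_α) ρ(c₍₂₎^α₍₁₎ ⊗ y_β) ⊗ c₍₂₎^α₍₂₎^β — is equivalent to ρ(c ⊗ xy) = ρ(c₍₁₎ ⊗ x_α) ρ(c₍₂₎^α ⊗ y) for all c ∈ C, x, y ∈ M. -/
import Mathlib


open TensorProduct LinearMap

noncomputable section

namespace Entwine

variable (k : Type) [Field k] (P : Type) [Ring P] [Algebra k P]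
  (C : Type) [AddCommGroup C] [Module k C] [Coalgebra k C]

/-- coproduct of `C` -/
abbrev Δ : C →ₗ[k] C ⊗[k] C := Coalgebra.comul
/-- counit of `C` -/
abbrev ε : C →ₗ[k] k := Coalgebra.counit
/-- multiplication of `P` -/
abbrev μ : P ⊗[k] P →ₗ[k] P := LinearMap.mul' k P

variable (ψ : C ⊗[k] P →ₗ[k] P ⊗[k] C)

/-- entwining axiom `ψ∘(id⊗μ) = (μ⊗id)∘ψ₂₃∘ψ₁₂` -/
def AxMul : Prop :=
  ψ ∘ₗ map LinearMap.id (μ k P) =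
    map (μ k P) LinearMap.id
      ∘ₗ (TensorProduct.assoc k P P C).symm.toLinearMap
      ∘ₗ map LinearMap.id ψ
      ∘ₗ (TensorProduct.assoc k P C P).toLinearMap
      ∘ₗ map ψ LinearMap.id
      ∘ₗ (TensorProduct.assoc k C P P).symm.toLinearMap

/-- entwining axiom `ψ(c ⊗ 1) = 1 ⊗ c` -/
def AxOne : Prop := ∀ c : C, ψ (c ⊗ₜ (1 : P)) = (1 : P) ⊗ₜ c

/-- entwining axiom `(id⊗Δ)∘ψ = ψ₁₂∘ψ₂₃∘(Δ⊗id)` -/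
def AxComul : Prop :=
  map LinearMap.id (Δ k C) ∘ₗ ψ =
    (TensorProduct.assoc k P C C).toLinearMap
      ∘ₗ map ψ LinearMap.id
      ∘ₗ (TensorProduct.assoc k C P C).symm.toLinearMap
      ∘ₗ map LinearMap.id ψ
      ∘ₗ (TensorProduct.assoc k C C P).toLinearMap
      ∘ₗ map (Δ k C) LinearMap.id

/-- entwining axiom `(id⊗ε)∘ψ = ε⊗id` -/
def AxCounit : Prop :=
  (TensorProduct.rid k P).toLinearMap ∘ₗ map LinearMap.id (ε k C) ∘ₗ ψ =
    (TensorProduct.lid k P).toLinearMap ∘ₗ map (ε k C) LinearMap.id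

/-- `ψ` is an entwining map for the algebra `P` and the coalgebra `C` -/
def IsEntwining : Prop :=
  AxMul k P C ψ ∧ AxOne k P C ψ ∧ AxComul k P C ψ ∧ AxCounit k P C ψ

variable (e : C)

/-- `e` is a group-like element -/
def IsGrouplike : Prop :=
  Δ k C e = e ⊗ₜ[k] e ∧ ε k C e = 1

variable (ψC : C ⊗[k] C →ₗ[k] C ⊗[k] C)

/-- `(id⊗Δ)∘ψ^C = ψ^C₁₂∘ψ^C₂₃∘(Δ⊗id)` -/
def AxPsiCComul : Prop :=
  map LinearMap.id (Δ k C) ∘ₗ ψC =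
    (TensorProduct.assoc k C C C).toLinearMap
      ∘ₗ map ψC LinearMap.id
      ∘ₗ (TensorProduct.assoc k C C C).symm.toLinearMap
      ∘ₗ map LinearMap.id ψC
      ∘ₗ (TensorProduct.assoc k C C C).toLinearMap
      ∘ₗ map (Δ k C) LinearMap.id

/-- `(id⊗ε)∘ψ^C = ε⊗id` -/
def AxPsiCCounit : Prop :=
  (TensorProduct.rid k C).toLinearMap ∘ₗ map LinearMap.id (ε k C) ∘ₗ ψC =
    (TensorProduct.lid k C).toLinearMap ∘ₗ map (ε k C) LinearMap.id

/-- `ψ^C(e ⊗ c) = Δc` -/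
def AxPsiCUnit : Prop := ∀ c : C, ψC (e ⊗ₜ[k] c) = Δ k C c

/-- `(P, C, ψ, e, ψ^C)` form entwining data -/
def IsEntwiningData : Prop :=
  IsEntwining k P C ψ ∧ IsGrouplike k C e ∧
    AxPsiCComul k C ψC ∧ AxPsiCCounit k C ψC ∧ AxPsiCUnit k C e ψC

/-- the right coaction `Δ_R u = ψ(e ⊗ u)` on `P` -/
def deltaR : P →ₗ[k] P ⊗[k] C := ψ ∘ₗ TensorProduct.mk k C P e

/-- the fixed point subspace `M = P^{coC}_e`, as a submodule of `P` -/
def Msub : Submodule k P where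
  carrier := {x : P | ψ (e ⊗ₜ x) = x ⊗ₜ e}
  add_mem' := by
    intro a b ha hb
    simp only [Set.mem_setOf_eq] at *
    rw [TensorProduct.tmul_add, map_add, ha, hb, TensorProduct.add_tmul]
  zero_mem' := by
    simp only [Set.mem_setOf_eq, TensorProduct.tmul_zero, map_zero,
      TensorProduct.zero_tmul]
  smul_mem' := by
    intro r x hx
    simp only [Set.mem_setOf_eq] at *
    rw [TensorProduct.tmul_smul, map_smul, hx, TensorProduct.smul_tmul']

/-- the subspace `M ⊗ C` of `P ⊗ C` -/
def MCsub : Submodule k (P ⊗[k] C) :=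
  LinearMap.range (map (Msub k P C ψ e).subtype (LinearMap.id : C →ₗ[k] C))

variable (ρ : C ⊗[k] P →ₗ[k] P) (σ : C ⊗[k] C →ₗ[k] P)

/-- the map `ρ̂ : c ⊗ x ↦ ρ(c₍₁₎ ⊗ x_α) ⊗ c₍₂₎^α` -/
def rhat : C ⊗[k] P →ₗ[k] P ⊗[k] C :=
  map ρ LinearMap.id
    ∘ₗ (TensorProduct.assoc k C P C).symm.toLinearMap
    ∘ₗ map LinearMap.id ψ
    ∘ₗ (TensorProduct.assoc k C C P).toLinearMap
    ∘ₗ map (Δ k C) LinearMap.id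

/-- the map `σ̂ : b ⊗ c ↦ σ(b₍₁₎ ⊗ c_A) ⊗ b₍₂₎^A` -/
def shat : C ⊗[k] C →ₗ[k] P ⊗[k] C :=
  map σ LinearMap.id
    ∘ₗ (TensorProduct.assoc k C C C).symm.toLinearMap
    ∘ₗ map LinearMap.id ψC
    ∘ₗ (TensorProduct.assoc k C C C).toLinearMap
    ∘ₗ map (Δ k C) LinearMap.id

/-- multiplication of the first two factors: `x ⊗ (y ⊗ c) ↦ xy ⊗ c` -/
def mulPC : P ⊗[k] (P ⊗[k] C) →ₗ[k] P ⊗[k] C :=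
  map (μ k P) LinearMap.id ∘ₗ (TensorProduct.assoc k P P C).symm.toLinearMap

/-- the crossed product `(x ⊗ b)(y ⊗ c) = xρ(b₍₁₎⊗y_α)σ(b₍₂₎^α₍₁₎⊗c_A) ⊗ b₍₂₎^α₍₂₎^A` -/
def prodX : (P ⊗[k] C) ⊗[k] (P ⊗[k] C) →ₗ[k] P ⊗[k] C :=
  mulPC k P C
    ∘ₗ map LinearMap.id (mulPC k P C)
    ∘ₗ map LinearMap.id
        (map LinearMap.id (shat k P C ψC σ)
          ∘ₗ (TensorProduct.assoc k P C C).toLinearMap)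
    ∘ₗ map LinearMap.id
        (map (rhat k P C ψ ρ) LinearMap.id
          ∘ₗ (TensorProduct.assoc k C P C).symm.toLinearMap)
    ∘ₗ (TensorProduct.assoc k P C (P ⊗[k] C)).toLinearMap

/-- condition (i): `ρ(e,x) = x` for `x ∈ M` and `ρ(c,1) = ε(c)1` -/
def CondI : Prop :=
  (∀ x : P, x ∈ Msub k P C ψ e → ρ (e ⊗ₜ x) = x) ∧
    ∀ c : C, ρ (c ⊗ₜ (1 : P)) = ε k C c • (1 : P)

/-- condition (ii): `ρ̂` maps `C ⊗ M` into `M ⊗ C` -/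
def CondII : Prop :=
  ∀ (c : C) (x : P), x ∈ Msub k P C ψ e →
    rhat k P C ψ ρ (c ⊗ₜ x) ∈ MCsub k P C ψ e

/-- the right hand side of condition (iii): `(μ⊗id)∘(id⊗ρ̂)∘(ρ̂⊗id)` -/
def BmapIII : C ⊗[k] (P ⊗[k] P) →ₗ[k] P ⊗[k] C :=
  mulPC k P C
    ∘ₗ map LinearMap.id (rhat k P C ψ ρ)
    ∘ₗ (TensorProduct.assoc k P C P).toLinearMap
    ∘ₗ map (rhat k P C ψ ρ) LinearMap.id
    ∘ₗ (TensorProduct.assoc k C P P).symm.toLinearMap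

/-- condition (iii): twisted multiplicativity of `ρ` -/
def CondIII : Prop :=
  ∀ (c : C) (x y : P), x ∈ Msub k P C ψ e → y ∈ Msub k P C ψ e →
    rhat k P C ψ ρ (c ⊗ₜ (x * y)) = BmapIII k P C ψ ρ (c ⊗ₜ (x ⊗ₜ y))

/-- `σ` takes values in `M` -/
def SigmaIntoM : Prop := ∀ b c : C, σ (b ⊗ₜ c) ∈ Msub k P C ψ e

/-- condition (iv): `σ(e⊗c) = ε(c)1` and `σ(c₍₁₎⊗e_A) ⊗ c₍₂₎^A = 1 ⊗ c` -/
def CondIV : Prop :=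
  (∀ c : C, σ (e ⊗ₜ c) = ε k C c • (1 : P)) ∧
    ∀ c : C, shat k P C ψC σ (c ⊗ₜ e) = (1 : P) ⊗ₜ c

/-- `(ρ, σ)` are crossed product data: conditions (i)–(iv). -/
def IsCrossedData : Prop :=
  CondI k P C ψ e ρ ∧ CondII k P C ψ e ρ ∧ CondIII k P C ψ e ρ ∧
    SigmaIntoM k P C ψ e σ ∧ CondIV k P C e ψC σ

/-- left hand side of the cocycle condition (2.6) -/
def CocLHS : C ⊗[k] (C ⊗[k] C) →ₗ[k] P ⊗[k] C :=
  mulPC k P C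
    ∘ₗ map LinearMap.id (shat k P C ψC σ)
    ∘ₗ (TensorProduct.assoc k P C C).toLinearMap
    ∘ₗ map (rhat k P C ψ ρ) LinearMap.id
    ∘ₗ (TensorProduct.assoc k C P C).symm.toLinearMap
    ∘ₗ map LinearMap.id (shat k P C ψC σ)

/-- right hand side of the cocycle condition (2.6) -/
def CocRHS : C ⊗[k] (C ⊗[k] C) →ₗ[k] P ⊗[k] C :=
  mulPC k P C
    ∘ₗ map LinearMap.id (shat k P C ψC σ)
    ∘ₗ (TensorProduct.assoc k P C C).toLinearMap
    ∘ₗ map (shat k P C ψC σ) LinearMap.id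
    ∘ₗ (TensorProduct.assoc k C C C).symm.toLinearMap

/-- the cocycle condition (2.6) -/
def Cocycle : Prop := CocLHS k P C ψ ψC ρ σ = CocRHS k P C ψC σ

/-- left hand side of the twisted module condition (2.7) -/
def TwLHS : C ⊗[k] (C ⊗[k] P) →ₗ[k] P ⊗[k] C :=
  mulPC k P C
    ∘ₗ map LinearMap.id (shat k P C ψC σ)
    ∘ₗ (TensorProduct.assoc k P C C).toLinearMap
    ∘ₗ map (rhat k P C ψ ρ) LinearMap.id
    ∘ₗ (TensorProduct.assoc k C P C).symm.toLinearMap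
    ∘ₗ map LinearMap.id (rhat k P C ψ ρ)

/-- right hand side of the twisted module condition (2.7) -/
def TwRHS : C ⊗[k] (C ⊗[k] P) →ₗ[k] P ⊗[k] C :=
  mulPC k P C
    ∘ₗ map LinearMap.id (rhat k P C ψ ρ)
    ∘ₗ (TensorProduct.assoc k P C P).toLinearMap
    ∘ₗ map (shat k P C ψC σ) LinearMap.id
    ∘ₗ (TensorProduct.assoc k C C P).symm.toLinearMap

/-- the twisted module condition (2.7), for `x ∈ M` -/
def Twisted : Prop :=
  ∀ (a b : C) (x : P), x ∈ Msub k P C ψ e →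
    TwLHS k P C ψ ψC ρ σ (a ⊗ₜ (b ⊗ₜ x)) = TwRHS k P C ψ ψC ρ σ (a ⊗ₜ (b ⊗ₜ x))

end Entwine

namespace Entwine

/-- the map `c ⊗ (x ⊗ y) ↦ ρ(c₍₁₎ ⊗ x_α)ρ(c₍₂₎^α ⊗ y)` -/
def SimpleIII (k : Type) [Field k] (P : Type) [Ring P] [Algebra k P]
    (C : Type) [AddCommGroup C] [Module k C] [Coalgebra k C]
    (ψ : C ⊗[k] P →ₗ[k] P ⊗[k] C) (ρ : C ⊗[k] P →ₗ[k] P) :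
    C ⊗[k] (P ⊗[k] P) →ₗ[k] P :=
  μ k P
    ∘ₗ map LinearMap.id ρ
    ∘ₗ (TensorProduct.assoc k P C P).toLinearMap
    ∘ₗ map (rhat k P C ψ ρ) LinearMap.id
    ∘ₗ (TensorProduct.assoc k C P P).symm.toLinearMap


set_option linter.unusedSectionVars false

section Aux

variable (k : Type) [Field k] (P : Type) [Ring P] [Algebra k P]
  (C : Type) [AddCommGroup C] [Module k C] [Coalgebra k C]
  (ψ : C ⊗[k] P →ₗ[k] P ⊗[k] C) (ρ : C ⊗[k] P →ₗ[k] P)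

/-- `ρ` with fixed left argument -/
abbrev ρl (a : C) : P →ₗ[k] P := ρ ∘ₗ TensorProduct.mk k C P a

lemma assoc_symm_map_rho (a : C) (w : P ⊗[k] C) :
    map ρ LinearMap.id ((TensorProduct.assoc k C P C).symm (a ⊗ₜ w)) =
      map (ρl k P C ρ a) LinearMap.id w := by
  induction w using TensorProduct.induction_on with
  | zero => simp
  | tmul p c => simp
  | add u v hu hv => simp [TensorProduct.tmul_add, hu, hv]

lemma mulPC_tmul (p : P) (w : P ⊗[k] C) :
    mulPC k P C (p ⊗ₜ w) = map (LinearMap.mulLeft k p) LinearMap.id w := by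
  induction w using TensorProduct.induction_on with
  | zero => simp [mulPC]
  | tmul q c => simp [mulPC, LinearMap.mul'_apply]
  | add u v hu hv => simp [mulPC, TensorProduct.tmul_add] at *; simp [hu, hv]

lemma rid_eps_map (f : P →ₗ[k] P) (w : P ⊗[k] C) :
    (TensorProduct.rid k P) (map LinearMap.id (ε k C) (map f LinearMap.id w)) =
      f ((TensorProduct.rid k P) (map LinearMap.id (ε k C) w)) := by
  induction w using TensorProduct.induction_on with
  | zero => simp
  | tmul q c => simp
  | add u v hu hv => simp [hu, hv]

lemma rhat_tmul (c : C) (x : P) {ι : Type} (s : Finset ι) (a b : ι → C)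
    (h : Δ k C c = ∑ i ∈ s, a i ⊗ₜ[k] b i) :
    rhat k P C ψ ρ (c ⊗ₜ x) =
      ∑ i ∈ s, map (ρl k P C ρ (a i)) LinearMap.id (ψ (b i ⊗ₜ x)) := by
  simp only [rhat, coe_comp, Function.comp_apply, LinearEquiv.coe_coe, map_tmul,
    id_coe, id_eq]
  rw [h, TensorProduct.sum_tmul]
  simp only [map_sum]
  refine Finset.sum_congr rfl fun i _ => ?_
  rw [TensorProduct.assoc_tmul, map_tmul, assoc_symm_map_rho]
  simp

lemma sum_eps_smul (c : C) {ι : Type} (s : Finset ι) (a b : ι → C)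
    (h : Δ k C c = ∑ i ∈ s, a i ⊗ₜ[k] b i) :
    ∑ i ∈ s, ε k C (b i) • a i = c := by
  have h2 := Coalgebra.lTensor_counit_comul (R := k) c
  rw [show Coalgebra.comul c = Δ k C c from rfl, h, map_sum] at h2
  simp only [lTensor_tmul] at h2
  have h3 := congrArg (TensorProduct.rid k C) h2
  simpa [map_sum] using h3

lemma counit_rhat (hcu : AxCounit k P C ψ) (c : C) (x : P) :
    (TensorProduct.rid k P) (map LinearMap.id (ε k C) (rhat k P C ψ ρ (c ⊗ₜ x))) =
      ρ (c ⊗ₜ x) := by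
  obtain ⟨s, hs⟩ := TensorProduct.exists_finset (R := k) (Δ k C c)
  rw [rhat_tmul k P C ψ ρ c x s _ _ hs]
  simp only [map_sum]
  have hcu' : ∀ u : C ⊗[k] P,
      (TensorProduct.rid k P) (map LinearMap.id (ε k C) (ψ u)) =
        (TensorProduct.lid k P) (map (ε k C) LinearMap.id u) := fun u => by
    have := LinearMap.congr_fun hcu u
    simpa using this
  calc ∑ i ∈ s, (TensorProduct.rid k P) (map LinearMap.id (ε k C)
        (map (ρl k P C ρ i.1) LinearMap.id (ψ (i.2 ⊗ₜ x))))
      = ∑ i ∈ s, ρ (i.1 ⊗ₜ (ε k C i.2 • x)) := by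
        refine Finset.sum_congr rfl fun i _ => ?_
        rw [rid_eps_map, hcu']
        simp
    _ = ρ ((∑ i ∈ s, ε k C i.2 • i.1) ⊗ₜ x) := by
        rw [TensorProduct.sum_tmul, map_sum]
        refine Finset.sum_congr rfl fun i _ => ?_
        rw [TensorProduct.tmul_smul, map_smul, ← map_smul, TensorProduct.smul_tmul']
    _ = ρ (c ⊗ₜ x) := by rw [sum_eps_smul k C c s _ _ hs]

lemma simpleIII_tmul (c : C) (x y : P) :
    SimpleIII k P C ψ ρ (c ⊗ₜ (x ⊗ₜ y)) =
      μ k P (map LinearMap.id ρ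
        ((TensorProduct.assoc k P C P) (rhat k P C ψ ρ (c ⊗ₜ x) ⊗ₜ y))) := by
  simp [SimpleIII]

lemma bmap_tmul (c : C) (x y : P) :
    BmapIII k P C ψ ρ (c ⊗ₜ (x ⊗ₜ y)) =
      mulPC k P C (map LinearMap.id (rhat k P C ψ ρ)
        ((TensorProduct.assoc k P C P) (rhat k P C ψ ρ (c ⊗ₜ x) ⊗ₜ y))) := by
  simp [BmapIII]

lemma forward_aux (hcu : AxCounit k P C ψ) (w : P ⊗[k] C) (y : P) :
    (TensorProduct.rid k P) (map LinearMap.id (ε k C)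
      (mulPC k P C (map LinearMap.id (rhat k P C ψ ρ)
        ((TensorProduct.assoc k P C P) (w ⊗ₜ y))))) =
      μ k P (map LinearMap.id ρ ((TensorProduct.assoc k P C P) (w ⊗ₜ y))) := by
  induction w using TensorProduct.induction_on with
  | zero => simp
  | tmul p c =>
    rw [TensorProduct.assoc_tmul, map_tmul, mulPC_tmul, rid_eps_map,
      counit_rhat k P C ψ ρ hcu]
    simp [LinearMap.mul'_apply]
  | add u v hu hv =>
    simp only [TensorProduct.add_tmul, map_add] at *
    rw [hu, hv]

/-- the map `(p⊗c)⊗(q⊗f) ↦ pρ(c⊗q) ⊗ f` -/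
def Wm : (P ⊗[k] C) ⊗[k] (P ⊗[k] C) →ₗ[k] P ⊗[k] C :=
  mulPC k P C
    ∘ₗ map LinearMap.id (map ρ LinearMap.id ∘ₗ (TensorProduct.assoc k C P C).symm.toLinearMap)
    ∘ₗ (TensorProduct.assoc k P C (P ⊗[k] C)).toLinearMap

/-- `rhat` without the initial comultiplication -/
def R0 : (C ⊗[k] C) ⊗[k] P →ₗ[k] P ⊗[k] C :=
  map ρ LinearMap.id
    ∘ₗ (TensorProduct.assoc k C P C).symm.toLinearMap
    ∘ₗ map LinearMap.id ψ
    ∘ₗ (TensorProduct.assoc k C C P).toLinearMap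

def Ry (y : P) : C ⊗[k] C →ₗ[k] P ⊗[k] C :=
  R0 k P C ψ ρ ∘ₗ (TensorProduct.mk k (C ⊗[k] C) P).flip y

def Zm (y : P) : (C ⊗[k] P) ⊗[k] (C ⊗[k] C) →ₗ[k] P ⊗[k] C :=
  mulPC k P C ∘ₗ map ρ (Ry k P C ψ ρ y)

def Th : (C ⊗[k] C) ⊗[k] (P ⊗[k] C) →ₗ[k] (C ⊗[k] P) ⊗[k] (C ⊗[k] C) :=
  (TensorProduct.assoc k (C ⊗[k] P) C C).toLinearMap
    ∘ₗ map ((TensorProduct.assoc k C P C).symm.toLinearMap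
        ∘ₗ map LinearMap.id ψ ∘ₗ (TensorProduct.assoc k C C P).toLinearMap) LinearMap.id
    ∘ₗ (TensorProduct.assoc k (C ⊗[k] C) P C).symm.toLinearMap

def Qm : (C ⊗[k] C) ⊗[k] P →ₗ[k] P ⊗[k] (C ⊗[k] C) :=
  (TensorProduct.assoc k P C C).toLinearMap
    ∘ₗ map ψ LinearMap.id
    ∘ₗ (TensorProduct.assoc k C P C).symm.toLinearMap
    ∘ₗ map LinearMap.id ψ
    ∘ₗ (TensorProduct.assoc k C C P).toLinearMap

def L1m (y : P) : C ⊗[k] (P ⊗[k] C) →ₗ[k] P ⊗[k] C :=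
  Wm k P C ρ ∘ₗ map (rhat k P C ψ ρ) (ψ ∘ₗ (TensorProduct.mk k C P).flip y)
    ∘ₗ (TensorProduct.assoc k C P C).symm.toLinearMap

def L2m (y : P) : C ⊗[k] (P ⊗[k] C) →ₗ[k] P ⊗[k] C :=
  mulPC k P C ∘ₗ map ρ (rhat k P C ψ ρ ∘ₗ (TensorProduct.mk k C P).flip y)
    ∘ₗ (TensorProduct.assoc k C P C).symm.toLinearMap

def G0m (y : P) : (C ⊗[k] C) ⊗[k] (P ⊗[k] C) →ₗ[k] P ⊗[k] C :=
  Wm k P C ρ ∘ₗ map (R0 k P C ψ ρ) (ψ ∘ₗ (TensorProduct.mk k C P).flip y)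
    ∘ₗ (TensorProduct.assoc k (C ⊗[k] C) P C).symm.toLinearMap

lemma Wm_tmul (p : P) (c : C) (q : P) (f : C) :
    Wm k P C ρ ((p ⊗ₜ c) ⊗ₜ (q ⊗ₜ f)) = (p * ρ (c ⊗ₜ q)) ⊗ₜ f := by
  simp [Wm, mulPC, LinearMap.mul'_apply]

lemma R0_tmul (a' a'' : C) (x' : P) :
    R0 k P C ψ ρ ((a' ⊗ₜ a'') ⊗ₜ x') =
      map ρ LinearMap.id ((TensorProduct.assoc k C P C).symm (a' ⊗ₜ ψ (a'' ⊗ₜ x'))) := by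
  simp [R0]

lemma rhat_R0 (d : C) (y : P) :
    rhat k P C ψ ρ (d ⊗ₜ y) = R0 k P C ψ ρ ((Δ k C d) ⊗ₜ y) := by
  simp [rhat, R0]

lemma L1m_tmul (y : P) (a : C) (x' : P) (d : C) :
    L1m k P C ψ ρ y (a ⊗ₜ (x' ⊗ₜ d)) =
      Wm k P C ρ (rhat k P C ψ ρ (a ⊗ₜ x') ⊗ₜ ψ (d ⊗ₜ y)) := by
  simp [L1m]

lemma L2m_tmul (y : P) (a : C) (x' : P) (d : C) :
    L2m k P C ψ ρ y (a ⊗ₜ (x' ⊗ₜ d)) =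
      mulPC k P C (ρ (a ⊗ₜ x') ⊗ₜ rhat k P C ψ ρ (d ⊗ₜ y)) := by
  simp [L2m]

lemma mu_assoc_symm (p : P) (w : P ⊗[k] C) :
    map (μ k P) LinearMap.id ((TensorProduct.assoc k P P C).symm (p ⊗ₜ w)) =
      map (LinearMap.mulLeft k p) LinearMap.id w := by
  induction w using TensorProduct.induction_on with
  | zero => simp
  | tmul q c => simp [LinearMap.mul'_apply]
  | add u v hu hv => simp [TensorProduct.tmul_add, hu, hv]

lemma Hw2 (p0 : P) (c : C) (w2 : P ⊗[k] C) :
    Wm k P C ρ ((p0 ⊗ₜ c) ⊗ₜ w2) =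
      map (LinearMap.mulLeft k p0) LinearMap.id
        (map ρ LinearMap.id ((TensorProduct.assoc k C P C).symm (c ⊗ₜ w2))) := by
  induction w2 using TensorProduct.induction_on with
  | zero => simp
  | tmul q f => simp [Wm_tmul]
  | add u v hu hv => simp [TensorProduct.tmul_add, hu, hv]

lemma Hw1 (y : P) (a' : C) (w1 : P ⊗[k] C) (d : C) :
    Wm k P C ρ ((map ρ LinearMap.id ((TensorProduct.assoc k C P C).symm (a' ⊗ₜ w1))) ⊗ₜ
        ψ (d ⊗ₜ y)) =
      Zm k P C ψ ρ y ((TensorProduct.assoc k (C ⊗[k] P) C C)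
        (((TensorProduct.assoc k C P C).symm (a' ⊗ₜ w1)) ⊗ₜ d)) := by
  induction w1 using TensorProduct.induction_on with
  | zero => simp
  | tmul p c =>
    simp only [TensorProduct.assoc_symm_tmul, map_tmul, id_coe, id_eq]
    rw [Hw2, TensorProduct.assoc_tmul]
    simp only [Zm, Ry, coe_comp, Function.comp_apply, map_tmul, id_coe, id_eq,
      flip_apply, TensorProduct.mk_apply, mulPC_tmul, R0_tmul]
  | add u v hu hv =>
    simp only [TensorProduct.tmul_add, TensorProduct.add_tmul, map_add] at *
    rw [hu, hv]

lemma K3a (y : P) (a : C) (w : P ⊗[k] C) :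
    L1m k P C ψ ρ y (a ⊗ₜ w) = G0m k P C ψ ρ y ((Δ k C a) ⊗ₜ w) := by
  induction w using TensorProduct.induction_on with
  | zero => simp
  | tmul x' d =>
    rw [L1m_tmul, rhat_R0]
    simp [G0m]
  | add u v hu hv =>
    simp only [TensorProduct.tmul_add, map_add] at *
    rw [hu, hv]

lemma K3b (y : P) (u : C ⊗[k] C) (w : P ⊗[k] C) :
    G0m k P C ψ ρ y (u ⊗ₜ w) = Zm k P C ψ ρ y (Th k P C ψ (u ⊗ₜ w)) := by
  induction u using TensorProduct.induction_on with
  | zero => simp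
  | tmul a' a'' =>
    induction w using TensorProduct.induction_on with
    | zero => simp
    | tmul x' d =>
      simp only [G0m, Th, coe_comp, Function.comp_apply, LinearEquiv.coe_coe,
        TensorProduct.assoc_symm_tmul, map_tmul, id_coe, id_eq, flip_apply,
        TensorProduct.mk_apply, TensorProduct.assoc_tmul, R0_tmul]
      rw [Hw1]
    | add u' v' hu hv =>
      simp only [TensorProduct.tmul_add, map_add] at *
      rw [hu, hv]
  | add u' v' hu hv =>
    simp only [TensorProduct.add_tmul, map_add] at *
    rw [hu, hv]

lemma K1 (y : P) (a : C) (w : P ⊗[k] C) :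
    L2m k P C ψ ρ y (a ⊗ₜ w) =
      Zm k P C ψ ρ y ((TensorProduct.assoc k C P (C ⊗[k] C)).symm
        (a ⊗ₜ (map LinearMap.id (Δ k C) w))) := by
  induction w using TensorProduct.induction_on with
  | zero => simp
  | tmul x' d =>
    rw [L2m_tmul]
    simp only [map_tmul, id_coe, id_eq, TensorProduct.assoc_symm_tmul, Zm, Ry,
      coe_comp, Function.comp_apply, flip_apply, TensorProduct.mk_apply]
    rw [rhat_R0]
  | add u v hu hv =>
    simp only [TensorProduct.tmul_add, map_add] at *
    rw [hu, hv]

lemma K2 (hcm : AxComul k P C ψ) (b : C) (x : P) :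
    map LinearMap.id (Δ k C) (ψ (b ⊗ₜ x)) = Qm k P C ψ ((Δ k C b) ⊗ₜ x) := by
  have h := LinearMap.congr_fun hcm (b ⊗ₜ x)
  simpa only [Qm, coe_comp, Function.comp_apply, LinearEquiv.coe_coe, map_tmul,
    id_coe, id_eq] using h

lemma K4c (a' : C) (w2 : P ⊗[k] C) (c : C) :
    (TensorProduct.assoc k (C ⊗[k] P) C C)
        (((TensorProduct.assoc k C P C).symm (a' ⊗ₜ w2)) ⊗ₜ c) =
      (TensorProduct.assoc k C P (C ⊗[k] C)).symm
        (a' ⊗ₜ ((TensorProduct.assoc k P C C) (w2 ⊗ₜ c))) := by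
  induction w2 using TensorProduct.induction_on with
  | zero => simp
  | tmul q f => simp
  | add u v hu hv =>
    simp only [TensorProduct.tmul_add, TensorProduct.add_tmul, map_add] at *
    rw [hu, hv]

lemma K4b (a' a'' : C) (w : P ⊗[k] C) :
    Th k P C ψ ((a' ⊗ₜ a'') ⊗ₜ w) =
      (TensorProduct.assoc k C P (C ⊗[k] C)).symm
        (a' ⊗ₜ ((TensorProduct.assoc k P C C)
          ((map ψ LinearMap.id) ((TensorProduct.assoc k C P C).symm (a'' ⊗ₜ w))))) := by
  induction w using TensorProduct.induction_on with
  | zero => simp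
  | tmul p c =>
    simp only [Th, coe_comp, Function.comp_apply, LinearEquiv.coe_coe,
      TensorProduct.assoc_symm_tmul, map_tmul, id_coe, id_eq,
      TensorProduct.assoc_tmul]
    rw [K4c]
  | add u v hu hv =>
    simp only [TensorProduct.tmul_add, map_add] at *
    rw [hu, hv]

lemma K4u (x : P) (u : C ⊗[k] C) (b : C) :
    Th k P C ψ (u ⊗ₜ ψ (b ⊗ₜ x)) =
      (TensorProduct.assoc k C P (C ⊗[k] C)).symm
        ((map LinearMap.id (Qm k P C ψ ∘ₗ (TensorProduct.mk k (C ⊗[k] C) P).flip x))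
          ((TensorProduct.assoc k C C C) (u ⊗ₜ b))) := by
  induction u using TensorProduct.induction_on with
  | zero => simp
  | tmul a' a'' =>
    rw [K4b]
    simp only [Qm, coe_comp, Function.comp_apply, LinearEquiv.coe_coe,
      TensorProduct.assoc_tmul, map_tmul, id_coe, id_eq, flip_apply,
      TensorProduct.mk_apply, TensorProduct.assoc_symm_tmul]
  | add u' v' hu hv =>
    simp only [TensorProduct.add_tmul, map_add] at *
    rw [hu, hv]

lemma key (hcm : AxComul k P C ψ) (c : C) (x y : P) {ι : Type} (s : Finset ι)
    (a b : ι → C) (hs : Δ k C c = ∑ i ∈ s, a i ⊗ₜ[k] b i) :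
    ∑ i ∈ s, L1m k P C ψ ρ y (a i ⊗ₜ ψ (b i ⊗ₜ x)) =
      ∑ i ∈ s, L2m k P C ψ ρ y (a i ⊗ₜ ψ (b i ⊗ₜ x)) := by
  have h1 : ∀ i, L1m k P C ψ ρ y (a i ⊗ₜ ψ (b i ⊗ₜ x)) =
      Zm k P C ψ ρ y ((TensorProduct.assoc k C P (C ⊗[k] C)).symm
        ((map LinearMap.id (Qm k P C ψ ∘ₗ (TensorProduct.mk k (C ⊗[k] C) P).flip x))
          ((TensorProduct.assoc k C C C) ((Δ k C (a i)) ⊗ₜ b i)))) := fun i => by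
    rw [K3a, K3b, K4u]
  have h2 : ∀ i, L2m k P C ψ ρ y (a i ⊗ₜ ψ (b i ⊗ₜ x)) =
      Zm k P C ψ ρ y ((TensorProduct.assoc k C P (C ⊗[k] C)).symm
        ((map LinearMap.id (Qm k P C ψ ∘ₗ (TensorProduct.mk k (C ⊗[k] C) P).flip x))
          (a i ⊗ₜ (Δ k C (b i))))) := fun i => by
    rw [K1, K2 k P C ψ hcm]
    simp only [map_tmul, id_coe, id_eq, coe_comp, Function.comp_apply, flip_apply,
      TensorProduct.mk_apply]
  simp only [h1, h2]
  have h3 : ∑ i ∈ s, (TensorProduct.assoc k C C C) ((Δ k C (a i)) ⊗ₜ[k] b i)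
      = ∑ i ∈ s, a i ⊗ₜ[k] (Δ k C (b i)) := by
    have hc := Coalgebra.coassoc_apply (R := k) c
    rw [show Coalgebra.comul (R := k) c = Δ k C c from rfl, hs] at hc
    simpa only [map_sum, LinearMap.rTensor_tmul, LinearMap.lTensor_tmul] using hc
  conv_lhs => rw [← map_sum, ← map_sum, ← map_sum]
  conv_rhs => rw [← map_sum, ← map_sum, ← map_sum]
  rw [h3]

lemma mcsub_decomp (e : C) {t : P ⊗[k] C} (ht : t ∈ MCsub k P C ψ e) :
    ∃ s : Finset ((Msub k P C ψ e) × C), t = ∑ p ∈ s, (p.1 : P) ⊗ₜ[k] p.2 := by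
  obtain ⟨u, hu⟩ := ht
  obtain ⟨s, hs⟩ := TensorProduct.exists_finset (R := k) u
  refine ⟨s, ?_⟩
  rw [← hu, hs, map_sum]
  simp

lemma axmul_tmul (hm : AxMul k P C ψ) (b : C) (x y : P) {ι : Type} (s : Finset ι)
    (m : ι → P) (d : ι → C) (h : ψ (b ⊗ₜ x) = ∑ i ∈ s, m i ⊗ₜ[k] d i) :
    ψ (b ⊗ₜ (x * y)) =
      ∑ i ∈ s, map (LinearMap.mulLeft k (m i)) LinearMap.id (ψ (d i ⊗ₜ y)) := by
  have h0 := LinearMap.congr_fun hm (b ⊗ₜ (x ⊗ₜ y))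
  simp only [coe_comp, Function.comp_apply, map_tmul, id_coe, id_eq,
    LinearEquiv.coe_coe, TensorProduct.assoc_symm_tmul, LinearMap.mul'_apply] at h0
  rw [h0, h, TensorProduct.sum_tmul]
  simp only [map_sum]
  refine Finset.sum_congr rfl fun i _ => ?_
  rw [TensorProduct.assoc_tmul, map_tmul, mu_assoc_symm]
  simp

lemma wmap_collect (w : P ⊗[k] C) (q : P) (f : C) :
    Wm k P C ρ (w ⊗ₜ (q ⊗ₜ f)) =
      (μ k P (map LinearMap.id ρ ((TensorProduct.assoc k P C P) (w ⊗ₜ q)))) ⊗ₜ f := by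
  induction w using TensorProduct.induction_on with
  | zero => simp
  | tmul p c => simp [Wm_tmul, LinearMap.mul'_apply]
  | add u v hu hv =>
    simp only [TensorProduct.add_tmul, map_add] at *
    rw [hu, hv]

end Aux

/-- If `ψ(C ⊗ M) ⊆ M ⊗ C` then condition (iii) is equivalent to
`ρ(c ⊗ xy) = ρ(c₍₁₎ ⊗ x_α)ρ(c₍₂₎^α ⊗ y)` for `x, y ∈ M`. -/
theorem condIII_iff_simple
    (k : Type) [Field k] (P : Type) [Ring P] [Algebra k P]
    (C : Type) [AddCommGroup C] [Module k C] [Coalgebra k C]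
    (ψ : C ⊗[k] P →ₗ[k] P ⊗[k] C) (e : C) (ψC : C ⊗[k] C →ₗ[k] C ⊗[k] C)
    (ρ : C ⊗[k] P →ₗ[k] P)
    (hdata : IsEntwiningData k P C ψ e ψC)
    (hψM : ∀ (c : C) (x : P), x ∈ Msub k P C ψ e →
      ψ (c ⊗ₜ x) ∈ MCsub k P C ψ e)
    (hI : CondI k P C ψ e ρ) (hII : CondII k P C ψ e ρ) :
    CondIII k P C ψ e ρ ↔
      ∀ (c : C) (x y : P), x ∈ Msub k P C ψ e → y ∈ Msub k P C ψ e →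
        ρ (c ⊗ₜ (x * y)) = SimpleIII k P C ψ ρ (c ⊗ₜ (x ⊗ₜ y)) := by
  constructor
  · intro hIII c x y hx hy
    have h := congrArg (fun t => (TensorProduct.rid k P) (map LinearMap.id (ε k C) t))
      (hIII c x y hx hy)
    rw [counit_rhat k P C ψ ρ hdata.1.2.2.2 c (x*y), bmap_tmul,
      forward_aux k P C ψ ρ hdata.1.2.2.2] at h
    rw [h, simpleIII_tmul]
  · intro hS
    intro c x y hx hy
    obtain ⟨s, hs⟩ := TensorProduct.exists_finset (R := k) (Δ k C c)
    have hdx : ∀ b : C, ∃ t : Finset ((Msub k P C ψ e) × C),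
        ψ (b ⊗ₜ x) = ∑ q ∈ t, (q.1 : P) ⊗ₜ[k] q.2 :=
      fun b => mcsub_decomp k P C ψ e (hψM b x hx)
    choose t ht using hdx
    have hdy : ∀ d : C, ∃ u : Finset ((Msub k P C ψ e) × C),
        ψ (d ⊗ₜ y) = ∑ r ∈ u, (r.1 : P) ⊗ₜ[k] r.2 :=
      fun d => mcsub_decomp k P C ψ e (hψM d y hy)
    choose u hu using hdy
    have hL : rhat k P C ψ ρ (c ⊗ₜ (x * y)) =
        ∑ i ∈ s, L1m k P C ψ ρ y (i.1 ⊗ₜ ψ (i.2 ⊗ₜ x)) := by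
      rw [rhat_tmul k P C ψ ρ c (x * y) s _ _ hs]
      refine Finset.sum_congr rfl fun i _ => ?_
      rw [axmul_tmul k P C ψ hdata.1.1 i.2 x y (t i.2) _ _ (ht i.2), map_sum]
      conv_rhs => rw [show (ψ (i.2 ⊗ₜ x) : P ⊗[k] C) =
        ∑ q ∈ t i.2, (q.1 : P) ⊗ₜ[k] q.2 from ht i.2]
      rw [TensorProduct.tmul_sum, map_sum]
      refine Finset.sum_congr rfl fun q _ => ?_
      rw [L1m_tmul, hu q.2, map_sum, map_sum, TensorProduct.tmul_sum, map_sum]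
      refine Finset.sum_congr rfl fun r _ => ?_
      rw [wmap_collect]
      simp only [map_tmul, id_coe, id_eq, LinearMap.mulLeft_apply, coe_comp,
        Function.comp_apply, TensorProduct.mk_apply]
      congr 1
      rw [hS i.1 q.1 r.1 q.1.2 r.1.2, simpleIII_tmul]
    have hR : BmapIII k P C ψ ρ (c ⊗ₜ (x ⊗ₜ y)) =
        ∑ i ∈ s, L2m k P C ψ ρ y (i.1 ⊗ₜ ψ (i.2 ⊗ₜ x)) := by
      rw [bmap_tmul, rhat_tmul k P C ψ ρ c x s _ _ hs, TensorProduct.sum_tmul]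
      simp only [map_sum]
      refine Finset.sum_congr rfl fun i _ => ?_
      conv_rhs => rw [show (ψ (i.2 ⊗ₜ x) : P ⊗[k] C) =
        ∑ q ∈ t i.2, (q.1 : P) ⊗ₜ[k] q.2 from ht i.2]
      rw [ht i.2, map_sum, TensorProduct.sum_tmul, TensorProduct.tmul_sum]
      simp only [map_sum]
      refine Finset.sum_congr rfl fun q _ => ?_
      rw [L2m_tmul]
      simp only [map_tmul, id_coe, id_eq, coe_comp, Function.comp_apply,
        TensorProduct.mk_apply, TensorProduct.assoc_tmul]
    rw [hL, hR]
    exact key k P C ψ ρ hdata.1.2.2.1 c x y s _ _ hs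

end Entwine
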